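/- arXiv:1404.6957 — 2 statements merged into one kernel-verified Lean document; each statement's English description precedes it below -/
import Mathlib

section
/- For all n, m ∈ ℤ with n ≠ m, the eigenvectors Φ_n = (φ_n, λ_n φ_n) and Φ_m = (φ_m, λ_m φ_m), with φ_n(y) = cos((6−8n)y), are orthogonal with respect to the inner product ⟨(q₁,q₂),(p₁,p₂)⟩ = ∫₀^{π/4} q₁'(y)p₁'(y) dy + ∫₀^{π/4} q₁(y)p₁(y) dy + ∫₀^{π/4} q₂(y)p₂(y) dy; explicitly, λ_n λ_m ∫₀^{π/4} sin(λ_n y) sin(λ_m y) dy + (1 + λ_n λ_m) ∫₀^{π/4} cos(λ_n y) cos(λ_m y) dy = 0. -/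
/-!
By the product-to-sum formulas both integrals are combinations of
`∫₀^{π/4} cos((λ_n ∓ λ_m) y) dy`. Since `λ_n - λ_m = 8(m - n)` and `λ_n + λ_m = 4(3 - 2(n + m))`
are nonzero multiples of `4`, each of these equals `sin(jπ)/(4j) = 0` for some integer `j ≠ 0`.
-/

open Real intervalIntegral

lemma integral_cos_mul_eq_zero {c L : ℝ} (hc : c ≠ 0) (hsin : sin (c * L) = 0) :
    ∫ y in (0:ℝ)..L, cos (c * y) = 0 := by
  rw [integral_comp_mul_left cos hc, integral_cos, hsin]
  simp

lemma integral_cos_four_int_mul_eq_zero {j : ℤ} (hj : j ≠ 0) :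
    ∫ y in (0:ℝ)..(π/4), cos (4 * j * y) = 0 :=
  integral_cos_mul_eq_zero (by positivity) <| by
    rw [show 4 * (j : ℝ) * (π / 4) = j * π by ring, sin_int_mul_pi]

lemma intervalIntegrable_cos_mul (c x₀ x₁ : ℝ) :
    IntervalIntegrable (fun y => cos (c * y)) MeasureTheory.volume x₀ x₁ :=
  (continuous_cos.comp (continuous_const_mul c)).intervalIntegrable _ _

lemma integral_sin_mul_mul_sin_mul (a b x₀ x₁ : ℝ) :
    ∫ y in x₀..x₁, sin (a * y) * sin (b * y) =
      ((∫ y in x₀..x₁, cos ((a - b) * y)) - ∫ y in x₀..x₁, cos ((a + b) * y)) / 2 := by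
  rw [← integral_sub (intervalIntegrable_cos_mul _ _ _) (intervalIntegrable_cos_mul _ _ _),
    ← integral_div]
  congr 1 with y
  rw [sub_mul, add_mul, cos_sub, cos_add]
  ring

lemma integral_cos_mul_mul_cos_mul (a b x₀ x₁ : ℝ) :
    ∫ y in x₀..x₁, cos (a * y) * cos (b * y) =
      ((∫ y in x₀..x₁, cos ((a - b) * y)) + ∫ y in x₀..x₁, cos ((a + b) * y)) / 2 := by
  rw [← integral_add (intervalIntegrable_cos_mul _ _ _) (intervalIntegrable_cos_mul _ _ _),
    ← integral_div]
  congr 1 with y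
  rw [sub_mul, add_mul, cos_sub, cos_add]
  ring

/-- For `n ≠ m`, the eigenvectors `Φ_n = (φ_n, λ_n φ_n)` and `Φ_m = (φ_m, λ_m φ_m)`,
with `φ_n(y) = cos(λ_n y)`, `λ_n = 6−8n`, are orthogonal in
`X = H¹(0,π/4) × L²(0,π/4)`:
`λ_n λ_m ∫₀^{π/4} sin(λ_n y) sin(λ_m y) dy
  + (1 + λ_n λ_m) ∫₀^{π/4} cos(λ_n y) cos(λ_m y) dy = 0`. -/
theorem stmt5 (n m : ℤ) (hnm : n ≠ m) :
    ((6:ℝ) - 8*(n:ℝ)) * ((6:ℝ) - 8*(m:ℝ)) *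
        (∫ y in (0:ℝ)..(π/4),
          Real.sin (((6:ℝ) - 8*(n:ℝ)) * y) * Real.sin (((6:ℝ) - 8*(m:ℝ)) * y))
      + (1 + ((6:ℝ) - 8*(n:ℝ)) * ((6:ℝ) - 8*(m:ℝ))) *
        (∫ y in (0:ℝ)..(π/4),
          Real.cos (((6:ℝ) - 8*(n:ℝ)) * y) * Real.cos (((6:ℝ) - 8*(m:ℝ)) * y)) = 0 := by
  have hdiff : ((6:ℝ) - 8*n) - (6 - 8*m) = 4 * ((2 * (m - n) : ℤ) : ℝ) := by push_cast; ring
  have hsum : ((6:ℝ) - 8*n) + (6 - 8*m) = 4 * ((3 - 2 * (n + m) : ℤ) : ℝ) := by push_cast; ring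
  rw [integral_sin_mul_mul_sin_mul, integral_cos_mul_mul_cos_mul, hdiff, hsum,
    integral_cos_four_int_mul_eq_zero (by omega), integral_cos_four_int_mul_eq_zero (by omega)]
  simp
end

section
/- Let H be a real or complex Hilbert space, a > 0, ω > 0, and let (e_m)_{m ≥ 1} be a sequence of differentiable functions e_m : [0, a] → H satisfying Re⟨e_m'(x), e_m(x)⟩ ≤ −ω·‖e_m(x)‖² for all x ∈ [0, a], and the concatenation condition e_m(0) = e_{m−1}(a) for all m ≥ 2. Then ‖e_m(a)‖ ≤ e^{−mωa}·‖e₁(0)‖ for every m ≥ 1; in particular e_m(a) → 0 in H as m → ∞. (This is the asymptotic convergence, over iterations of the space-like variable, of the iterative observer's state estimation error to zero.) -/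
/-!
Along each pass, dissipativity makes the Lyapunov function `x ↦ e^{2ωx} ‖e_m(x)‖²`
nonincreasing, since its derivative is `2 e^{2ωx} (ω ‖e_m‖² + Re⟨e_m', e_m⟩) ≤ 0`. Hence one
pass over `[0, a]` contracts the error by the factor `e^{-ωa}`, and the concatenation condition
chains these contractions into `‖e_m(a)‖ ≤ (e^{-ωa})^m ‖e_1(0)‖`, which tends to `0` as `ωa > 0`.
-/

open Real Filter Set
open scoped InnerProductSpace

section Dissipative

variable {𝕜 H : Type*} [RCLike 𝕜] [NormedAddCommGroup H] [InnerProductSpace 𝕜 H]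
  [NormedSpace ℝ H]

theorem HasDerivWithinAt.norm_sq_of_rclike {f : ℝ → H} {f' : H} {s : Set ℝ} {x : ℝ}
    (hf : HasDerivWithinAt f f' s x) :
    HasDerivWithinAt (fun t => ‖f t‖ ^ 2) (2 * RCLike.re ⟪f', f x⟫_𝕜) s x := by
  have hinner := RCLike.reCLM.hasFDerivAt.comp_hasDerivWithinAt x (hf.inner 𝕜 hf)
  have hre :
      RCLike.re (⟪f x, f'⟫_𝕜 + ⟪f', f x⟫_𝕜) = 2 * RCLike.re ⟪f', f x⟫_𝕜 := by
    rw [map_add, inner_re_symm]; ring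
  simpa only [Function.comp_def, RCLike.reCLM_apply, inner_self_eq_norm_sq, hre] using hinner

variable {s t ω : ℝ} {f f' : ℝ → H}

theorem antitoneOn_exp_mul_norm_sq_of_dissipative
    (hf : ∀ x ∈ Icc s t, HasDerivWithinAt f (f' x) (Icc s t) x)
    (hdiss : ∀ x ∈ Icc s t, RCLike.re ⟪f' x, f x⟫_𝕜 ≤ -ω * ‖f x‖ ^ 2) :
    AntitoneOn (fun x => exp (2 * ω * x) * ‖f x‖ ^ 2) (Icc s t) := by
  set V : ℝ → ℝ := fun x => exp (2 * ω * x) * ‖f x‖ ^ 2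
  set V' : ℝ → ℝ := fun x =>
    2 * exp (2 * ω * x) * (ω * ‖f x‖ ^ 2 + RCLike.re ⟪f' x, f x⟫_𝕜)
  have hV : ∀ x ∈ Icc s t, HasDerivWithinAt V (V' x) (Icc s t) x := fun x hx =>
    (((hasDerivAt_id' x).const_mul (2 * ω)).exp.hasDerivWithinAt.mul
      (hf x hx).norm_sq_of_rclike).congr_deriv (by ring)
  have hV' : ∀ x ∈ Icc s t, V' x ≤ 0 := fun x hx =>
    mul_nonpos_of_nonneg_of_nonpos (by positivity) (by linarith [hdiss x hx])
  refine antitoneOn_of_hasDerivWithinAt_nonpos (convex_Icc s t)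
    (fun x hx => (hV x hx).continuousWithinAt) (fun x hx => ?_)
    fun x hx => hV' x (interior_subset hx)
  rw [interior_Icc] at hx ⊢
  exact (hV x (Ioo_subset_Icc_self hx)).mono Ioo_subset_Icc_self

theorem norm_le_exp_mul_norm_of_dissipative (hst : s ≤ t)
    (hf : ∀ x ∈ Icc s t, HasDerivWithinAt f (f' x) (Icc s t) x)
    (hdiss : ∀ x ∈ Icc s t, RCLike.re ⟪f' x, f x⟫_𝕜 ≤ -ω * ‖f x‖ ^ 2) :
    ‖f t‖ ≤ exp (-ω * (t - s)) * ‖f s‖ := by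
  have hsq : ∀ x, (exp (ω * x) * ‖f x‖) ^ 2 = exp (2 * ω * x) * ‖f x‖ ^ 2 := fun x => by
    rw [mul_pow, sq (exp _), ← exp_add]; ring_nf
  have hdecay : exp (ω * t) * ‖f t‖ ≤ exp (ω * s) * ‖f s‖ := by
    refine (pow_le_pow_iff_left₀ (by positivity) (by positivity) two_ne_zero).1 ?_
    rw [hsq, hsq]
    exact antitoneOn_exp_mul_norm_sq_of_dissipative hf hdiss (left_mem_Icc.2 hst)
      (right_mem_Icc.2 hst) hst
  calc ‖f t‖ = exp (-(ω * t)) * (exp (ω * t) * ‖f t‖) := by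
        rw [← mul_assoc, ← exp_add, neg_add_cancel, exp_zero, one_mul]
    _ ≤ exp (-(ω * t)) * (exp (ω * s) * ‖f s‖) := by gcongr
    _ = exp (-ω * (t - s)) * ‖f s‖ := by rw [← mul_assoc, ← exp_add]; ring_nf

end Dissipative

theorem le_pow_mul_of_le_mul_succ {u : ℕ → ℝ} {r C : ℝ} (hr : 0 ≤ r) (h₁ : u 1 ≤ r * C)
    (hstep : ∀ m, 1 ≤ m → u (m + 1) ≤ r * u m) : ∀ m, 1 ≤ m → u m ≤ r ^ m * C := by
  refine Nat.le_induction (by simpa using h₁) fun m hm ih => ?_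
  calc u (m + 1) ≤ r * u m := hstep m hm
    _ ≤ r * (r ^ m * C) := by gcongr
    _ = r ^ (m + 1) * C := by ring

theorem stmt11_general {𝕜 : Type*} [RCLike 𝕜] {H : Type*} [NormedAddCommGroup H]
    [InnerProductSpace 𝕜 H] [NormedSpace ℝ H]
    (a ω : ℝ) (ha : 0 < a) (hω : 0 < ω) (e : ℕ → ℝ → H) (e' : ℕ → ℝ → H)
    (hderiv : ∀ m : ℕ, 1 ≤ m → ∀ x ∈ Set.Icc (0:ℝ) a,
      HasDerivWithinAt (e m) (e' m x) (Set.Icc 0 a) x)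
    (hdiss : ∀ m : ℕ, 1 ≤ m → ∀ x ∈ Set.Icc (0:ℝ) a,
      RCLike.re (inner 𝕜 (e' m x) (e m x) : 𝕜) ≤ -ω * ‖e m x‖^2)
    (hconcat : ∀ m : ℕ, 2 ≤ m → e m 0 = e (m - 1) a) :
    (∀ m : ℕ, 1 ≤ m → ‖e m a‖ ≤ Real.exp (-(m:ℝ) * ω * a) * ‖e 1 0‖) ∧
    Tendsto (fun m : ℕ => e m a) atTop (nhds 0) := by
  have hpass : ∀ m, 1 ≤ m → ‖e m a‖ ≤ exp (-ω * a) * ‖e m 0‖ := fun m hm => by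
    simpa using norm_le_exp_mul_norm_of_dissipative ha.le (hderiv m hm) (hdiss m hm)
  have hbound : ∀ m, 1 ≤ m → ‖e m a‖ ≤ exp (-ω * a) ^ m * ‖e 1 0‖ :=
    le_pow_mul_of_le_mul_succ (exp_pos _).le (hpass 1 le_rfl) fun m hm => by
      simpa [hconcat (m + 1) (by omega)] using hpass (m + 1) (by omega)
  have hpow : ∀ m : ℕ, exp (-ω * a) ^ m = exp (-(m : ℝ) * ω * a) := fun m => by
    rw [← exp_nat_mul]; ring_nf
  refine ⟨fun m hm => hpow m ▸ hbound m hm, ?_⟩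
  have hratio : exp (-ω * a) < 1 := exp_lt_one_iff.2 (by nlinarith)
  refine squeeze_zero_norm' (eventually_atTop.2 ⟨1, hbound⟩) ?_
  simpa using (tendsto_pow_atTop_nhds_zero_of_lt_one (exp_pos _).le hratio).mul_const ‖e 1 0‖

/-- Asymptotic convergence of the iterative observer's state estimation error over
iterations of the space-like variable: in a real or complex Hilbert space `H`, if each
`e_m : [0, a] → H` (`m ≥ 1`) is differentiable with
`Re⟨e_m'(x), e_m(x)⟩ ≤ −ω·‖e_m(x)‖²` on `[0, a]`, and `e_m(0) = e_{m−1}(a)` for `m ≥ 2`,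
then `‖e_m(a)‖ ≤ e^{−mωa}·‖e₁(0)‖` for all `m ≥ 1`; in particular `e_m(a) → 0`. -/
theorem stmt11 {𝕜 : Type*} [RCLike 𝕜] {H : Type*} [NormedAddCommGroup H]
    [InnerProductSpace 𝕜 H] [CompleteSpace H]
    [NormedSpace ℝ H] [IsScalarTower ℝ 𝕜 H]
    (a ω : ℝ) (ha : 0 < a) (hω : 0 < ω) (e : ℕ → ℝ → H) (e' : ℕ → ℝ → H)
    (hderiv : ∀ m : ℕ, 1 ≤ m → ∀ x ∈ Set.Icc (0:ℝ) a,
      HasDerivWithinAt (e m) (e' m x) (Set.Icc 0 a) x)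
    (hdiss : ∀ m : ℕ, 1 ≤ m → ∀ x ∈ Set.Icc (0:ℝ) a,
      RCLike.re (inner 𝕜 (e' m x) (e m x) : 𝕜) ≤ -ω * ‖e m x‖^2)
    (hconcat : ∀ m : ℕ, 2 ≤ m → e m 0 = e (m - 1) a) :
    (∀ m : ℕ, 1 ≤ m → ‖e m a‖ ≤ Real.exp (-(m:ℝ) * ω * a) * ‖e 1 0‖) ∧
    Tendsto (fun m : ℕ => e m a) atTop (nhds 0) :=
  stmt11_general a ω ha hω e e' hderiv hdiss hconcat
end
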